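/- Let x ≥ 3, r ≥ 0 and n, k be integers with n = k·x + r and 3 ≤ k ≤ x − r + 1. Then the base-(2^x − 1) digit list of 2^n is [2^r·C(k,0), 2^r·C(k,1), ..., 2^r·C(k,k)]; i.e., the representation of 2^n in base 2^x − 1 is the binomial form with multiplier α = 2^r. -/

import Mathlib

/-!
With `b = 2^x - 1` we have `2^n = 2^r (b + 1)^k = ∑ 2^r C(k,i) b^i`. This expansion is the
base-`b` representation as soon as every coefficient is a digit, and `2^r C(k,i) < b` follows
from `C(k,i) < 2^(k-1)` (with a margin of two once `k ≥ 4`) and `k + r ≤ x + 1`.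
-/

open Finset

namespace Nat

theorem ofDigits_map_range (b : ℕ) (f : ℕ → ℕ) (n : ℕ) :
    ofDigits b ((List.range n).map f) = ∑ i ∈ range n, f i * b ^ i := by
  induction n with
  | zero => simp
  | succ n ih =>
    rw [List.range_succ, List.map_append, ofDigits_append, ih, sum_range_succ]
    simp [ofDigits_singleton, mul_comm]

theorem digits_mul_add_one_pow {b α k : ℕ} (hα : α ≠ 0) (hdigit : ∀ i, α * k.choose i < b) :
    digits b (α * (b + 1) ^ k) = (List.range (k + 1)).map (fun i => α * k.choose i) := by
  have hb : 1 < b := by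
    have hlead := hdigit 0
    rw [choose_zero_right, mul_one] at hlead
    omega
  have hvalue : ofDigits b ((List.range (k + 1)).map (fun i => α * k.choose i))
      = α * (b + 1) ^ k := by
    rw [ofDigits_map_range, add_pow, mul_sum]
    exact sum_congr rfl fun i _ => by push_cast; ring
  rw [← hvalue]
  refine digits_ofDigits b hb _ (by simpa using fun i _ => hdigit i) fun _ => ?_
  simpa [List.getLast_eq_getElem] using hα

theorem choose_add_two_le_two_pow_pred {k : ℕ} (hk : 4 ≤ k) (i : ℕ) :
    k.choose i + 2 ≤ 2 ^ (k - 1) := by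
  induction k, hk using Nat.le_induction generalizing i with
  | base =>
    rcases Nat.lt_or_ge 4 i with h | h
    · simp [choose_eq_zero_of_lt h]
    · interval_cases i <;> decide
  | succ k hk ih =>
    have hpow : 2 ^ k = 2 * 2 ^ (k - 1) := by rw [← pow_succ']; congr 1; omega
    rw [Nat.add_sub_cancel]
    cases i with
    | zero => have h0 := ih 0; rw [choose_zero_right] at h0 ⊢; omega
    | succ j =>
      rw [choose_succ_succ']
      have hj := ih j
      have hj1 := ih (j + 1)
      omega

theorem two_pow_mul_choose_lt_two_pow_sub_one {x k r : ℕ} (hx : 3 ≤ x) (hk : 3 ≤ k)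
    (hkr : k + r ≤ x + 1) (i : ℕ) : 2 ^ r * k.choose i < 2 ^ x - 1 := by
  have h8 : 2 ^ 3 ≤ 2 ^ x := Nat.pow_le_pow_right two_pos hx
  rcases (show k = 3 ∨ 4 ≤ k by omega) with rfl | hk4
  · have hC : choose 3 i ≤ 3 := by
      rcases Nat.lt_or_ge 3 i with h | h
      · simp [choose_eq_zero_of_lt h]
      · interval_cases i <;> decide
    rcases r.eq_zero_or_pos with rfl | hr
    · rw [pow_zero, one_mul]
      omega
    · have h2r : 2 ^ 1 ≤ 2 ^ r := Nat.pow_le_pow_right two_pos hr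
      have hpow : 2 ^ r * 2 ^ 2 ≤ 2 ^ x := by
        rw [← pow_add]; exact Nat.pow_le_pow_right two_pos (by omega)
      have hscaled := Nat.mul_le_mul_left (2 ^ r) hC
      omega
  · have hpow : 2 ^ r * 2 ^ (k - 1) ≤ 2 ^ x := by
      rw [← pow_add]; exact Nat.pow_le_pow_right two_pos (by omega)
    have hscaled := Nat.mul_le_mul_left (2 ^ r) (choose_add_two_le_two_pow_pred hk4 i)
    rw [Nat.mul_add] at hscaled
    have h1r : 1 ≤ 2 ^ r := Nat.one_le_two_pow
    omega

end Nat

/-- If `n = k·x + r` with `x ≥ 3` and `3 ≤ k ≤ x - r + 1`, then the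
base-`(2^x - 1)` digit list of `2^n` is `[2^r·C(k,0), ..., 2^r·C(k,k)]`,
i.e., the binomial form with multiplier `2^r`. -/
theorem binomial_form_of_small_k' (x k r n : ℕ) (hx : 3 ≤ x) (hk : 3 ≤ k)
    (hn : n = k * x + r) (hkr : k ≤ x - r + 1) :
    Nat.digits (2 ^ x - 1) (2 ^ n)
      = (List.range (k + 1)).map (fun i => 2 ^ r * Nat.choose k i) := by
  have hpow : 2 ^ n = 2 ^ r * (2 ^ x - 1 + 1) ^ k := by
    rw [Nat.sub_add_cancel Nat.one_le_two_pow, ← pow_mul, ← pow_add, hn]; ring_nf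
  rw [hpow]
  exact Nat.digits_mul_add_one_pow (pow_ne_zero r two_ne_zero)
    (Nat.two_pow_mul_choose_lt_two_pow_sub_one hx hk (by omega))
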